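/- arXiv:2502.18102 — 4 statements merged into one kernel-verified Lean document; each statement's English description precedes it below -/
import Mathlib

section
/- Let Γ and Ω be groupoids, Λ : Γ ⥤ Ω a functor, and π : Y → Ob(Ω) a surjective function. Define Z := {(x,y) ∈ Ob(Γ) × Y | Λ(x) = π(y)} and let ζ : Z → Ob(Γ) be the first projection, which is surjective. Then there is a functor Λ̃ : Γ^ζ ⥤ Ω^π, sending an object (x,y) to y and acting on morphisms by Λ (using the identifications Λ(x) = π(y)), such that P^π ∘ Λ̃ = Λ ∘ P^ζ holds strictly; moreover, if Λ is an equivalence of categories, then Λ̃ is an equivalence of categories. -/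
/-!
The projections `P^π` and `P^ζ` are fully faithful and the square `P^π ∘ Λ̃ = Λ ∘ P^ζ` commutes
strictly, so `Λ̃` is full and faithful whenever `Λ` is. For essential surjectivity, given `y` pick
`x` with `Λ(x) ≅ π(y)` and `y'` with `π(y') = Λ(x)`; then `(x, y') ∈ Z` is sent to `y' ≅ y`.
-/

open CategoryTheory Function

/-- Given a functor `Λ : Γ ⥤ Ω` and `π : Y → Ob Ω`, with
`Z = {(x,y) | Λ(x) = π(y)}` and `ζ : Z → Ob Γ` the first projection, this is
the functor `Λ̃ : Γ^ζ ⥤ Ω^π` sending an object `(x,y)` to `y` and acting on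
morphisms by `Λ` (using the identifications `Λ(x) = π(y)`). -/
def coveringPullback {Γ : Type*} [Groupoid Γ] {Ω : Type*} [Groupoid Ω]
    (L : Γ ⥤ Ω) {Y : Type*} (π : Y → Ω) :
    InducedCategory Γ (fun z : {p : Γ × Y // L.obj p.1 = π p.2} => z.val.1) ⥤
      InducedCategory Ω π where
  obj z := z.val.2
  map {z₁ z₂} f := InducedCategory.homMk (show π z₁.val.2 ⟶ π z₂.val.2 from
    eqToHom z₁.prop.symm ≫ L.map f.hom ≫ eqToHom z₂.prop)
  map_id z := by
    apply InducedCategory.hom_ext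
    simp
  map_comp {z₁ z₂ z₃} f g := by
    apply InducedCategory.hom_ext
    simp

theorem Function.Surjective.fiberProduct_fst {X Y W : Type*} (f : X → W) {π : Y → W}
    (hπ : Surjective π) : Surjective (fun z : {p : X × Y // f p.1 = π p.2} => z.val.1) := by
  intro x
  obtain ⟨y, hy⟩ := hπ (f x)
  exact ⟨⟨(x, y), hy.symm⟩, rfl⟩

namespace coveringPullback

variable {Γ : Type*} [Groupoid Γ] {Ω : Type*} [Groupoid Ω] (L : Γ ⥤ Ω) {Y : Type*} (π : Y → Ω)

theorem comp_inducedFunctor :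
    coveringPullback L π ⋙ inducedFunctor π =
      inducedFunctor (fun z : {p : Γ × Y // L.obj p.1 = π p.2} => z.val.1) ⋙ L :=
  CategoryTheory.Functor.ext (fun z => z.prop.symm) (fun _ _ _ => by simp [coveringPullback])

theorem full_of_full [L.Full] : (coveringPullback L π).Full :=
  Functor.Full.of_comp_faithful_iso (eqToIso (comp_inducedFunctor L π))

theorem faithful_of_faithful [L.Faithful] : (coveringPullback L π).Faithful :=
  Functor.Faithful.of_comp_iso (eqToIso (comp_inducedFunctor L π))

theorem essSurj_of_essSurj [L.EssSurj] (hπ : Surjective π) : (coveringPullback L π).EssSurj where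
  mem_essImage y := by
    obtain ⟨y', hy'⟩ := hπ (L.obj (L.objPreimage (π y)))
    exact ⟨⟨(L.objPreimage (π y), y'), hy'.symm⟩,
      ⟨InducedCategory.isoMk (eqToIso hy' ≪≫ L.objObjPreimageIso (π y))⟩⟩

theorem isEquivalence_of_isEquivalence [L.IsEquivalence] (hπ : Surjective π) :
    (coveringPullback L π).IsEquivalence where
  faithful := faithful_of_faithful L π
  full := full_of_full L π
  essSurj := essSurj_of_essSurj L π hπ

end coveringPullback

/-- Let `Λ : Γ ⥤ Ω` be a functor of groupoids and `π : Y → Ob Ω` a surjective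
function.  With `Z := {(x,y) | Λ(x) = π(y)}` and `ζ : Z → Ob Γ` the first
projection: `ζ` is surjective; the functor `Λ̃ : Γ^ζ ⥤ Ω^π` satisfies
`P^π ∘ Λ̃ = Λ ∘ P^ζ` strictly; and if `Λ` is an equivalence of categories then
so is `Λ̃`. -/
theorem coveringPullback_spec {Γ : Type*} [Groupoid Γ] {Ω : Type*} [Groupoid Ω]
    (L : Γ ⥤ Ω) {Y : Type*} (π : Y → Ω) (hπ : Surjective π) :
    Surjective (fun z : {p : Γ × Y // L.obj p.1 = π p.2} => z.val.1) ∧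
      coveringPullback L π ⋙ inducedFunctor π =
        inducedFunctor (fun z : {p : Γ × Y // L.obj p.1 = π p.2} => z.val.1) ⋙ L ∧
      (L.IsEquivalence → (coveringPullback L π).IsEquivalence) :=
  ⟨hπ.fiberProduct_fst L.obj, coveringPullback.comp_inducedFunctor L π,
    fun _ => coveringPullback.isEquivalence_of_isEquivalence L π hπ⟩
end

section
/- Let Γ be a groupoid and π : Y → Ob(Γ), π' : Y' → Ob(Γ) surjective functions. Let Z := {(y,y') ∈ Y × Y' | π(y) = π'(y')} and ζ : Z → Ob(Γ), ζ(y,y') := π(y). Then the canonical functor Γ^ζ ⥤ Comma(P^π, P^{π'}), which sends an object (y,y') to the triple (y, y', identity morphism of π(y), using π(y) = π'(y')) and a morphism γ : π(y₁) ⟶ π(y₂) to the corresponding pair of morphisms in Γ^π and Γ^{π'}, is an equivalence of categories, and composing it with the projection Comma(P^π,P^{π'}) → Γ^π → Γ recovers P^ζ. -/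
open CategoryTheory Function

/-- The canonical functor `Γ^ζ ⥤ Γ^π ×_Γ Γ^{π'}` for the fibre product
`Z = {(y,y') | π y = π' y'}` of two surjective functions, sending `(y,y')` to
the triple `(y, y', id)` and acting on morphisms in the evident way. -/
def canonicalFunctorToComma {Γ : Type*} [Groupoid Γ] {Y Y' : Type*}
    (π : Y → Γ) (π' : Y' → Γ) :
    InducedCategory Γ (fun z : {p : Y × Y' // π p.1 = π' p.2} => π z.val.1) ⥤
      Comma (inducedFunctor π) (inducedFunctor π') where
  obj z := ⟨z.val.1, z.val.2, eqToHom z.prop⟩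
  map {z₁ z₂} γ :=
    { left := InducedCategory.homMk γ.hom
      right := InducedCategory.homMk (show π' z₁.val.2 ⟶ π' z₂.val.2 from
        eqToHom z₁.prop.symm ≫ γ.hom ≫ eqToHom z₂.prop)
      w := by simp }
  map_id z := by
    apply CommaMorphism.ext
    · rfl
    · apply InducedCategory.hom_ext
      show eqToHom z.prop.symm ≫ 𝟙 (π z.val.1) ≫ eqToHom z.prop = 𝟙 (π' z.val.2)
      simp
  map_comp {z₁ z₂ z₃} γ δ := by
    apply CommaMorphism.ext
    · rfl
    · apply InducedCategory.hom_ext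
      show eqToHom z₁.prop.symm ≫ (γ.hom ≫ δ.hom) ≫ eqToHom z₃.prop =
        (eqToHom z₁.prop.symm ≫ γ.hom ≫ eqToHom z₂.prop) ≫
          (eqToHom z₂.prop.symm ≫ δ.hom ≫ eqToHom z₃.prop)
      simp

/-
A morphism between objects in the image of the functor is a pair `(α, β)` in which `β` is `α`
transported along `π y = π' y'`, so the functor is fully faithful. An object `(y, y', φ)` is
isomorphic to the image of `(y, y'')` for any `y''` over `π y`, which exists since `π'` is
surjective; the comparison `y'' ⟶ y'` is `φ`, invertible because `Γ` is a groupoid.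
-/

namespace canonicalFunctorToComma

variable {Γ : Type*} [Groupoid Γ] {Y Y' : Type*} (π : Y → Γ) (π' : Y' → Γ)

def fullyFaithful : (canonicalFunctorToComma π π').FullyFaithful where
  preimage f := InducedCategory.homMk f.left.hom
  map_preimage f :=
    CommaMorphism.ext rfl (InducedCategory.hom_ext ((eqToHom_comp_iff _ _ _).mpr f.w))
  preimage_map _ := rfl

def isoObjOfFiber (X : Comma (inducedFunctor π) (inducedFunctor π')) {y' : Y'}
    (hy' : π' y' = π X.left) :
    (canonicalFunctorToComma π π').obj ⟨(X.left, y'), hy'.symm⟩ ≅ X :=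
  Comma.isoMk (Iso.refl _)
    (InducedCategory.isoMk <|
      (Groupoid.isoEquivHom _ _).symm (eqToHom hy' ≫ X.hom : π' y' ⟶ π' X.right))
    (show 𝟙 (π X.left) ≫ X.hom = eqToHom hy'.symm ≫ eqToHom hy' ≫ X.hom by simp)

lemma essSurj (hπ' : Surjective π') : (canonicalFunctorToComma π π').EssSurj where
  mem_essImage X :=
    let ⟨_, hy'⟩ := hπ' (π X.left)
    ⟨_, ⟨isoObjOfFiber π π' X hy'⟩⟩

end canonicalFunctorToComma

theorem canonicalFunctorToComma_isEquivalence_general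
    {Γ : Type*} [Groupoid Γ] {Y Y' : Type*}
    (π : Y → Γ) (π' : Y' → Γ) (hπ' : Surjective π') :
    (canonicalFunctorToComma π π').IsEquivalence ∧
      canonicalFunctorToComma π π' ⋙
          Comma.fst (inducedFunctor π) (inducedFunctor π') ⋙ inducedFunctor π =
        inducedFunctor (fun z : {p : Y × Y' // π p.1 = π' p.2} => π z.val.1) :=
  ⟨{ faithful := (canonicalFunctorToComma.fullyFaithful π π').faithful
     full := (canonicalFunctorToComma.fullyFaithful π π').full
     essSurj := canonicalFunctorToComma.essSurj π π' hπ' }, rfl⟩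

/-- For a groupoid `Γ` and surjective functions `π : Y → Ob Γ`,
`π' : Y' → Ob Γ`, the canonical functor from the covering groupoid of the
fibre product `Z = {(y,y') | π y = π' y'}` to the fibre product groupoid
`Γ^π ×_Γ Γ^{π'}` is an equivalence of categories, and composing it with the
projection `Γ^π ×_Γ Γ^{π'} → Γ^π → Γ` recovers `P^ζ`. -/
theorem canonicalFunctorToComma_isEquivalence
    {Γ : Type*} [Groupoid Γ] {Y Y' : Type*}
    (π : Y → Γ) (π' : Y' → Γ) (hπ : Surjective π) (hπ' : Surjective π') :
    (canonicalFunctorToComma π π').IsEquivalence ∧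
      canonicalFunctorToComma π π' ⋙
          Comma.fst (inducedFunctor π) (inducedFunctor π') ⋙ inducedFunctor π =
        inducedFunctor (fun z : {p : Y × Y' // π p.1 = π' p.2} => π z.val.1) :=
  canonicalFunctorToComma_isEquivalence_general π π' hπ'
end

section
/- Let Γ and Γ' be groupoids equipped with strict involutions, i.e. functors τ : Γ ⥤ Γ and τ' : Γ' ⥤ Γ' with τ∘τ = id_Γ and τ'∘τ' = id_{Γ'} as functors. Form the semidirect product groupoid Γ⋊ℤ₂: its objects are those of Γ, a morphism x ⟶ y is a pair (g, γ) with g ∈ {+1,−1} and γ : τ^g(x) ⟶ y (where τ^{+1} := id and τ^{−1} := τ), and composition is (h, δ)∘(g, γ) := (h·g, δ∘τ^h(γ)); similarly form Γ'⋊ℤ₂. Suppose F : Γ ⥤ Γ' is an equivalence of categories satisfying F∘τ = τ'∘F strictly. Then the induced functor Γ⋊ℤ₂ ⥤ Γ'⋊ℤ₂, acting as F on objects and sending a morphism (g, γ) to (g, F(γ)) (using the identification F(τ^g(x)) = τ'^g(F(x))), is an equivalence of categories. -/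
open CategoryTheory

universe v u v' u'

/-- A strict involution of a groupoid: a functor `τ : Γ ⥤ Γ` with
`τ ∘ τ = id` as functors. -/
structure StrictInvolution (Γ : Type u) [Groupoid.{v} Γ] where
  τ : Γ ⥤ Γ
  invol : τ ⋙ τ = 𝟭 Γ

variable {Γ : Type u} [Groupoid.{v} Γ]

/-- `τ^g` for a sign `g ∈ {+1,−1} = ℤˣ`: the identity functor if `g = +1`,
and `τ` if `g = −1`. -/
def tpow (τ : Γ ⥤ Γ) (g : ℤˣ) : Γ ⥤ Γ := if g = 1 then 𝟭 Γ else τ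

lemma tpow_one (τ : Γ ⥤ Γ) : tpow τ 1 = 𝟭 Γ := if_pos rfl

lemma tpow_neg_one (τ : Γ ⥤ Γ) : tpow τ (-1) = τ := if_neg (by decide)

lemma tpow_comp (T : StrictInvolution Γ) (h g : ℤˣ) :
    tpow T.τ g ⋙ tpow T.τ h = tpow T.τ (h * g) := by
  rcases Int.units_eq_one_or g with hg | hg <;>
    rcases Int.units_eq_one_or h with hh | hh <;> subst hg <;> subst hh <;>
    simp [tpow_one, tpow_neg_one, Int.units_mul_self, T.invol,
      Functor.id_comp, Functor.comp_id]

lemma tpow_map_map (T : StrictInvolution Γ) (h g : ℤˣ) {x y : Γ} (γ : x ⟶ y) :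
    (tpow T.τ h).map ((tpow T.τ g).map γ) =
      eqToHom (Functor.congr_obj (tpow_comp T h g) x) ≫
        (tpow T.τ (h * g)).map γ ≫
          eqToHom (Functor.congr_obj (tpow_comp T h g) y).symm := by
  have h1 := Functor.congr_hom (tpow_comp T h g) γ
  simpa using h1

/-- Type synonym for the semidirect product groupoid `Γ ⋊ ℤ₂` of a groupoid
with a strict involution. -/
def SemiProd (Γ : Type u) [Groupoid.{v} Γ] (T : StrictInvolution Γ) := Γ

/-- The underlying object of `Γ` of an object of `Γ ⋊ ℤ₂`. -/
def SemiProd.as {T : StrictInvolution Γ} (x : SemiProd Γ T) : Γ := x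

/-- A helper for proving heterogeneous equality of morphisms. -/
private lemma heq_hom {x₁ x₂ y : Γ} (e : x₁ = x₂) (a : x₁ ⟶ y) (b : x₂ ⟶ y)
    (hab : a = eqToHom e ≫ b) : HEq a b := by
  subst e; simpa using hab

/-- The semidirect product groupoid `Γ ⋊ ℤ₂`: its objects are those of `Γ`,
a morphism `x ⟶ y` is a pair `(g, γ)` with `g ∈ {+1,−1}` and
`γ : τ^g(x) ⟶ y`, and composition is `(h, δ) ∘ (g, γ) = (h·g, δ ∘ τ^h(γ))`. -/
instance SemiProd.groupoid (T : StrictInvolution Γ) : Groupoid (SemiProd Γ T) where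
  Hom x y := Σ g : ℤˣ, ((tpow T.τ g).obj x.as ⟶ y.as)
  id x := ⟨1, eqToHom (Functor.congr_obj (tpow_one T.τ) x.as)⟩
  comp {x y z} f k :=
    ⟨k.1 * f.1,
      eqToHom (Functor.congr_obj (tpow_comp T k.1 f.1) x.as).symm ≫
        (tpow T.τ k.1).map f.2 ≫ k.2⟩
  id_comp {x y} f := by
    apply Sigma.ext
    · exact mul_one f.1
    · apply heq_hom (congrArg (fun g : ℤˣ => (tpow T.τ g).obj x.as) (mul_one f.1))
      simp [eqToHom_map]
  comp_id {x y} f := by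
    apply Sigma.ext
    · exact one_mul f.1
    · apply heq_hom (congrArg (fun g : ℤˣ => (tpow T.τ g).obj x.as) (one_mul f.1))
      have := Functor.congr_hom (tpow_one T.τ) f.2
      simp [this]
  assoc {w x y z} f g h := by
    apply Sigma.ext
    · exact (mul_assoc h.1 g.1 f.1).symm
    · apply heq_hom (congrArg (fun u : ℤˣ => (tpow T.τ u).obj w.as)
        (mul_assoc h.1 g.1 f.1).symm)
      simp [tpow_map_map, eqToHom_map]
  inv {x y} f :=
    ⟨f.1⁻¹,
      (tpow T.τ f.1⁻¹).map (Groupoid.inv f.2) ≫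
        eqToHom (Functor.congr_obj (tpow_comp T f.1⁻¹ f.1) x.as) ≫
        eqToHom (congrArg (fun g : ℤˣ => (tpow T.τ g).obj x.as) (inv_mul_cancel f.1)) ≫
        eqToHom (Functor.congr_obj (tpow_one T.τ) x.as)⟩
  inv_comp {x y} f := by
    apply Sigma.ext
    · exact mul_inv_cancel f.1
    · apply heq_hom (congrArg (fun g : ℤˣ => (tpow T.τ g).obj y.as) (mul_inv_cancel f.1))
      have h2 := Functor.congr_hom
        (show tpow T.τ (f.1 * f.1⁻¹) = 𝟭 Γ by rw [mul_inv_cancel, tpow_one])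
        (Groupoid.inv f.2)
      have h3 := Functor.congr_hom
        (show tpow T.τ (f.1 * f.1⁻¹) = 𝟭 Γ by rw [mul_inv_cancel, tpow_one]) f.2
      simp [tpow_map_map, eqToHom_map, h2, h3]
  comp_inv {x y} f := by
    apply Sigma.ext
    · exact inv_mul_cancel f.1
    · apply heq_hom (congrArg (fun g : ℤˣ => (tpow T.τ g).obj x.as) (inv_mul_cancel f.1))
      simp only [eqToHom_map, Category.assoc, ← Functor.map_comp_assoc]
      simp [eqToHom_map]

lemma SemiProd.id_def {T : StrictInvolution Γ} (x : SemiProd Γ T) :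
    𝟙 x = ⟨1, eqToHom (Functor.congr_obj (tpow_one T.τ) x.as)⟩ := rfl

lemma SemiProd.comp_def {T : StrictInvolution Γ} {x y z : SemiProd Γ T}
    (f : x ⟶ y) (k : y ⟶ z) :
    f ≫ k = ⟨k.1 * f.1,
      eqToHom (Functor.congr_obj (tpow_comp T k.1 f.1) x.as).symm ≫
        (tpow T.τ k.1).map f.2 ≫ k.2⟩ := rfl

variable {Γ' : Type u'} [Groupoid.{v'} Γ']

lemma tpow_comm (T : StrictInvolution Γ) (T' : StrictInvolution Γ') (F : Γ ⥤ Γ')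
    (hF : T.τ ⋙ F = F ⋙ T'.τ) (g : ℤˣ) :
    tpow T.τ g ⋙ F = F ⋙ tpow T'.τ g := by
  rcases Int.units_eq_one_or g with hg | hg <;> subst hg <;>
    simp [tpow_one, tpow_neg_one, hF, Functor.id_comp, Functor.comp_id]

lemma tpow_map_comm (T : StrictInvolution Γ) (T' : StrictInvolution Γ') (F : Γ ⥤ Γ')
    (hF : T.τ ⋙ F = F ⋙ T'.τ) (g : ℤˣ) {x y : Γ} (γ : x ⟶ y) :
    F.map ((tpow T.τ g).map γ) =
      eqToHom (Functor.congr_obj (tpow_comm T T' F hF g) x) ≫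
        (tpow T'.τ g).map (F.map γ) ≫
          eqToHom (Functor.congr_obj (tpow_comm T T' F hF g) y).symm := by
  have h1 := Functor.congr_hom (tpow_comm T T' F hF g) γ
  simpa using h1

/-- The functor `Γ ⋊ ℤ₂ ⥤ Γ' ⋊ ℤ₂` induced by a functor `F : Γ ⥤ Γ'`
commuting strictly with the involutions: it acts as `F` on objects and sends
a morphism `(g, γ)` to `(g, F(γ))` (using `F(τ^g(x)) = τ'^g(F(x))`). -/
def SemiProd.functorMap (T : StrictInvolution Γ) (T' : StrictInvolution Γ')
    (F : Γ ⥤ Γ') (hF : T.τ ⋙ F = F ⋙ T'.τ) :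
    SemiProd Γ T ⥤ SemiProd Γ' T' where
  obj x := F.obj x.as
  map {x y} f :=
    ⟨f.1, eqToHom (Functor.congr_obj (tpow_comm T T' F hF f.1) x.as).symm ≫ F.map f.2⟩
  map_id x := by
    apply Sigma.ext
    · rfl
    · apply heq_of_eq
      show _ = eqToHom (Functor.congr_obj (tpow_one T'.τ) (F.obj x.as))
      simp [SemiProd.id_def, eqToHom_map]
      erw [eqToHom_trans]
      rfl
  map_comp {x y z} f k := by
    apply Sigma.ext
    · rfl
    · apply heq_of_eq
      show _ = eqToHom _ ≫ (tpow T'.τ k.1).map (eqToHom _ ≫ F.map f.2) ≫ eqToHom _ ≫ F.map k.2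
      simp [SemiProd.comp_def, tpow_map_comm T T' F hF, eqToHom_map]
      erw [eqToHom_map]
      simp
      erw [eqToHom_trans_assoc]
      rfl

namespace SemiProd

variable (T : StrictInvolution Γ) (T' : StrictInvolution Γ') (F : Γ ⥤ Γ')
  (hF : T.τ ⋙ F = F ⋙ T'.τ)

lemma functorMap_map {x y : SemiProd Γ T} (f : x ⟶ y) :
    (functorMap T T' F hF).map f =
      ⟨f.1, eqToHom (Functor.congr_obj (tpow_comm T T' F hF f.1) x.as).symm ≫ F.map f.2⟩ :=
  rfl

instance functorMap_faithful [F.Faithful] : (functorMap T T' F hF).Faithful where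
  map_injective {x y} := by
    rintro ⟨g, γ⟩ ⟨g', γ'⟩ h
    obtain ⟨rfl, hγ⟩ := Sigma.mk.inj_iff.mp h
    have : F.map γ = F.map γ' := (cancel_epi _).mp (eq_of_heq hγ)
    rw [F.map_injective this]

instance functorMap_full [F.Full] : (functorMap T T' F hF).Full where
  map_surjective {x y} := by
    rintro ⟨g, δ⟩
    refine ⟨⟨g, F.preimage
      (eqToHom (Functor.congr_obj (tpow_comm T T' F hF g) x.as) ≫ δ)⟩, ?_⟩
    refine Sigma.ext rfl (heq_of_eq ?_)
    simp only [functorMap_map, Functor.map_preimage]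
    exact (eqToHom_trans_assoc _ _ δ).trans (by simp)

instance functorMap_essSurj [F.EssSurj] : (functorMap T T' F hF).EssSurj where
  mem_essImage y :=
    ⟨F.objPreimage y.as, ⟨Groupoid.isoEquivHom _ _ |>.symm
      ⟨1, eqToHom (Functor.congr_obj (tpow_one T'.τ) _) ≫
        (F.objObjPreimageIso y.as).hom⟩⟩⟩

end SemiProd

/-- Let `Γ`, `Γ'` be groupoids with strict involutions `τ`, `τ'`, and let
`F : Γ ⥤ Γ'` be an equivalence of categories satisfying `F ∘ τ = τ' ∘ F`
strictly.  Then the induced functor `Γ ⋊ ℤ₂ ⥤ Γ' ⋊ ℤ₂` between the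
semidirect product groupoids, acting as `F` on objects and sending `(g, γ)`
to `(g, F(γ))`, is an equivalence of categories. -/
theorem semiProd_functorMap_isEquivalence
    (T : StrictInvolution Γ) (T' : StrictInvolution Γ')
    (F : Γ ⥤ Γ') (hF : T.τ ⋙ F = F ⋙ T'.τ) (hFe : F.IsEquivalence) :
    (SemiProd.functorMap T T' F hF).IsEquivalence := by
  have := hFe.faithful
  have := hFe.full
  have := hFe.essSurj
  exact { faithful := inferInstance, full := inferInstance, essSurj := inferInstance }
end

section
/- Let Λ and Γ be groupoids. A functor T : Λ ⥤ Γ is an equivalence of categories if and only if there exist a type Y, a surjective function π : Y → Ob(Γ), and an equivalence of categories S : Λ ⥤ Γ^π such that T is naturally isomorphic to the composite S ⋙ P^π. -/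
open CategoryTheory Function

universe v₁ v₂ u₁ u₂

/-! The projection `inducedFunctor π` is always fully faithful, and it is essentially surjective
once `π` is onto, so it is an equivalence. Hence any `S ⋙ inducedFunctor π` with `S` an
equivalence is one; conversely an equivalence `T` factors through `inducedFunctor id`. -/

section

variable {C : Type*} [Category* C] {D : Type*} [Category* D] {E : Type*} [Category* E]

lemma inducedFunctor_essSurj_of_surjective {Y : Type*} {π : Y → D} (hπ : Surjective π) :
    (inducedFunctor π).EssSurj where
  mem_essImage X := by
    obtain ⟨y, rfl⟩ := hπ X
    exact ⟨y, ⟨Iso.refl _⟩⟩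

lemma inducedFunctor_isEquivalence_of_surjective {Y : Type*} {π : Y → D} (hπ : Surjective π) :
    (inducedFunctor π).IsEquivalence :=
  have := inducedFunctor_essSurj_of_surjective hπ
  { }

noncomputable def CategoryTheory.Functor.isoCompInvComp (F : C ⥤ D) (G : E ⥤ D)
    [G.IsEquivalence] : F ≅ (F ⋙ G.inv) ⋙ G :=
  (Functor.isoWhiskerLeft F G.asEquivalence.counitIso ≪≫ F.rightUnitor).symm

end

/-- A functor `T : Λ ⥤ Γ` between groupoids is an equivalence of categories if
and only if there exist a type `Y`, a surjective function `π : Y → Ob Γ`, and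
an equivalence of categories `S : Λ ⥤ Γ^π` into the covering groupoid, such
that `T` is naturally isomorphic to the composite `S ⋙ P^π`. -/
theorem isEquivalence_iff_factors_through_covering_groupoid
    {Λ : Type u₁} [Groupoid.{v₁} Λ] {Γ : Type u₂} [Groupoid.{v₂} Γ] (T : Λ ⥤ Γ) :
    T.IsEquivalence ↔
      ∃ (Y : Type u₂) (π : Y → Γ) (_ : Surjective π)
        (S : Λ ⥤ InducedCategory Γ π),
          S.IsEquivalence ∧ Nonempty (T ≅ S ⋙ inducedFunctor π) := by
  constructor
  · intro _
    have := inducedFunctor_isEquivalence_of_surjective (surjective_id (α := Γ))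
    exact ⟨Γ, id, surjective_id, T ⋙ (inducedFunctor id).inv, inferInstance,
      ⟨T.isoCompInvComp _⟩⟩
  · rintro ⟨Y, π, hπ, S, _, ⟨e⟩⟩
    have := inducedFunctor_isEquivalence_of_surjective hπ
    exact Functor.isEquivalence_of_iso e.symm
end
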